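/- Let M be a definably complete locally o-minimal structure. The discrete closure operator discl, where discl(A) is the set of x ∈ M belonging to some A-definable discrete closed subset of M, is idempotent: discl(discl(A)) = discl(A) for every A ⊆ M. -/

import Mathlib

open FirstOrder Set

namespace Paper

variable (L : FirstOrder.Language)

/-- A subset of `Mⁿ` definable with arbitrary parameters from `M`. -/
def Def (M : Type*) [L.Structure M] {n : ℕ} (s : Set (Fin n → M)) : Prop :=
  Set.Definable (Set.univ : Set M) L s

/-- A subset of `M` definable with arbitrary parameters from `M`. -/
def Def1 (M : Type*) [L.Structure M] (s : Set M) : Prop :=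
  Def L M {f : Fin 1 → M | f 0 ∈ s}

/-- A subset of `M × M` definable with arbitrary parameters from `M`. -/
def Def2 (M : Type*) [L.Structure M] (s : Set (M × M)) : Prop :=
  Def L M {f : Fin 2 → M | (f 0, f 1) ∈ s}

/-- A discrete subset of a topological space. -/
def IsDiscrete {X : Type*} [TopologicalSpace X] (s : Set X) : Prop :=
  ∀ x ∈ s, ∃ U : Set X, IsOpen U ∧ x ∈ U ∧ U ∩ s = {x}

/-- An open interval (with possibly infinite endpoints). -/
def IsOInterval {M : Type*} [Preorder M] (s : Set M) : Prop :=
  (∃ a b : M, s = Set.Ioo a b) ∨ (∃ a, s = Set.Ioi a) ∨ (∃ b, s = Set.Iio b) ∨ s = Set.univ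

/-- A finite union of points and open intervals. -/
def FinUnionPtsIntervals {M : Type*} [Preorder M] (s : Set M) : Prop :=
  ∃ (F : Finset M) (n : ℕ) (J : Fin n → Set M),
    (∀ i, IsOInterval (J i)) ∧ s = ↑F ∪ ⋃ i, J i

/-- Local o-minimality. -/
def LocallyOMinimal (M : Type*) [L.Structure M] [LinearOrder M] : Prop :=
  ∀ s : Set M, Def1 L M s → ∀ a : M,
    ∃ I : Set M, IsOInterval I ∧ a ∈ I ∧ FinUnionPtsIntervals (s ∩ I)

/-- Definable completeness. -/
def DefinablyComplete (M : Type*) [L.Structure M] [LinearOrder M] : Prop :=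
  ∀ s : Set M, Def1 L M s → s.Nonempty →
    (BddAbove s → ∃ a, IsLUB s a) ∧ (BddBelow s → ∃ a, IsGLB s a)

/-- A coordinate projection of `X ⊆ Mⁿ` to `M^d` has image with nonempty interior. -/
def HasDimWit {M : Type*} [TopologicalSpace M] {n : ℕ} (X : Set (Fin n → M)) (d : ℕ) : Prop :=
  ∃ σ : Fin d ↪ Fin n, (interior ((fun x => x ∘ σ) '' X)).Nonempty

/-- The projection dimension of a subset of `Mⁿ`, with `projDim ∅ = ⊥ = -∞`. -/
noncomputable def projDim {M : Type*} [TopologicalSpace M] {n : ℕ}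
    (X : Set (Fin n → M)) : WithBot ℕ∞ :=
  ⨆ d ∈ {d : ℕ | HasDimWit X d}, ((d : ℕ∞) : WithBot ℕ∞)

/-- The discrete closure of `A ⊆ M`. -/
def discl (M : Type*) [L.Structure M] [TopologicalSpace M] (A : Set M) : Set M :=
  {x | ∃ s : Set M, Set.Definable A L {f : Fin 1 → M | f 0 ∈ s} ∧
    IsDiscrete s ∧ IsClosed s ∧ x ∈ s}


end Paper

open Paper

/-!
A formula uses only finitely many parameters, so it suffices to eliminate a single parameter
`b ∈ discl A`. A set defined over `A ∪ {b}` is the fibre `E_b` of an `A`-definable family `E`, and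
`b` lies in an `A`-definable discrete closed set `S`. The union of the fibres `E_y` over those
`y ∈ S` whose fibre is discrete and closed is `A`-definable and contains `E_b`. By local
o-minimality it is discrete and closed as soon as it contains no open interval, and an open
interval cannot be covered by a definable family of discrete closed sets indexed by a discrete
closed set.
-/

open FirstOrder FirstOrder.Language Filter Topology

namespace Set

section Definability

variable {L : Language} {M : Type*} [L.Structure M] {A : Set M} {α : Type*}

theorem definable_eq (i j : α) : A.Definable L {f : α → M | f i = f j} :=
  ⟨(Term.var i).equal (Term.var j), by ext; simp⟩

theorem definable_eq_const (i : α) {a : M} (ha : a ∈ A) : A.Definable L {f : α → M | f i = a} :=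
  ⟨(Term.var i).equal (L.con (⟨a, ha⟩ : A)).term, by ext; simp⟩

theorem Definable.comp_fin_one {S : Set M} (hS : A.Definable L {w : Fin 1 → M | w 0 ∈ S})
    (i : α) : A.Definable L {f : α → M | f i ∈ S} :=
  hS.preimage_comp ![i]

theorem Definable.comp_fin_two {E : Set (M × M)}
    (hE : A.Definable L {w : Fin 2 → M | (w 0, w 1) ∈ E}) (i j : α) :
    A.Definable L {f : α → M | (f i, f j) ∈ E} :=
  hE.preimage_comp ![i, j]

theorem Definable.imp {P Q : (α → M) → Prop} (hP : A.Definable L {f | P f})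
    (hQ : A.Definable L {f | Q f}) : A.Definable L {f | P f → Q f} := by
  convert hP.compl.union hQ using 1
  ext f
  simp [imp_iff_not_or]

/- `exists_cons`, `forall_cons` and `cons_const` bind coordinate `0` and shift the others down, so
in the definability proofs below coordinate `k` is the `k`-th innermost bound variable or
parameter. -/
variable {n : ℕ} {P : (Fin (n + 1) → M) → Prop}

theorem Definable.exists_cons (h : A.Definable L {f | P f}) :
    A.Definable L {g : Fin n → M | ∃ a, P (Fin.cons a g)} := by
  convert h.image_comp Fin.succ using 1
  ext g
  constructor
  · rintro ⟨a, ha⟩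
    exact ⟨Fin.cons a g, ha, funext fun _ => rfl⟩
  · rintro ⟨f, hf, rfl⟩
    refine ⟨f 0, ?_⟩
    show P (Fin.cons (f 0) (Fin.tail f))
    rwa [Fin.cons_self_tail]

theorem Definable.forall_cons (h : A.Definable L {f | P f}) :
    A.Definable L {g : Fin n → M | ∀ a, P (Fin.cons a g)} := by
  convert (Definable.exists_cons (P := fun f => ¬ P f) h.compl).compl using 1
  ext g
  simp

theorem Definable.cons_const (h : A.Definable L {f | P f}) {a : M} (ha : a ∈ A) :
    A.Definable L {g : Fin n → M | P (Fin.cons a g)} := by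
  convert ((definable_eq_const 0 ha).inter h).exists_cons (P := fun f => f 0 = a ∧ P f) using 1
  ext g
  simp

theorem Definable.exists_family_of_insert {b : M} {s : Set M}
    (hs : (insert b A).Definable L {f : Fin 1 → M | f 0 ∈ s}) :
    ∃ E : Set (M × M), A.Definable L {w : Fin 2 → M | (w 0, w 1) ∈ E} ∧
      ∀ x, (x, b) ∈ E ↔ x ∈ s := by
  classical
  obtain ⟨φ, hφ⟩ := definable_iff_exists_formula_sum.1 hs
  -- the parameter `b`, unless it lies in `A`, becomes the free variable `1`
  let ρ : ↥(insert b A) ⊕ Fin 1 → ↥A ⊕ Fin 2 :=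
    Sum.elim (fun c => if h : (c : M) ∈ A then .inl ⟨c, h⟩ else .inr 1) fun _ => .inr 0
  refine ⟨{z | (φ.relabel ρ).Realize (Sum.elim (↑) ![z.1, z.2])},
    definable_iff_exists_formula_sum.2 ⟨φ.relabel ρ, ?_⟩, fun x => ?_⟩
  · ext w
    simp only [mem_ofPred_eq]
    congr! 3
    ext i
    fin_cases i <;> rfl
  · have hρ : Sum.elim ((↑) : A → M) ![x, b] ∘ ρ = Sum.elim (↑) ![x] := by
      ext (⟨c, hc⟩ | i)
      · by_cases h : c ∈ A
        · simp [ρ, h]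
        · obtain rfl := (mem_insert_iff.1 hc).resolve_right h
          simp [ρ, h]
      · simp [ρ, Subsingleton.elim i 0]
    simpa [Formula.realize_relabel, hρ] using (Set.ext_iff.1 hφ ![x]).symm

variable [L.IsOrdered] [LinearOrder M] [L.OrderedStructure M]

theorem definable_le (i j : α) : A.Definable L {f : α → M | f i ≤ f j} := by
  refine Definable.mono ?_ (empty_subset A)
  refine empty_definable_iff.2 ⟨(Term.var (Sum.inl i)).le (Term.var (Sum.inl j)), ?_⟩
  ext
  simp [Formula.Realize, Term.realize_le]

theorem definable_lt (i j : α) : A.Definable L {f : α → M | f i < f j} := by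
  convert (definable_le (L := L) (A := A) i j).inter (definable_eq i j).compl using 1
  ext f
  simp [lt_iff_le_and_ne]

end Definability

end Set

theorem Filter.EventuallyConst.iUnion {α ι : Type*} [Finite ι] {l : Filter α} {s : ι → Set α}
    (h : ∀ i, EventuallyConst (s i) l) : EventuallyConst (⋃ i, s i) l := by
  simp only [eventuallyConst_set] at h ⊢
  by_cases hin : ∃ i, ∀ᶠ x in l, x ∈ s i
  · obtain ⟨i, hi⟩ := hin
    exact .inl (hi.mono fun x hx => mem_iUnion.2 ⟨i, hx⟩)
  · have hout := fun i => (h i).resolve_left (not_exists.1 hin i)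
    exact .inr (by simpa only [mem_iUnion, not_exists] using eventually_all.2 hout)

theorem Filter.EventuallyConst.eventually_mem_of_frequently {α : Type*} {l : Filter α}
    {s : Set α} (h : EventuallyConst s l) (hfreq : ∃ᶠ x in l, x ∈ s) : ∀ᶠ x in l, x ∈ s :=
  (eventuallyConst_set.1 h).resolve_right hfreq

section OrderTopology

variable {M : Type*} [LinearOrder M] [TopologicalSpace M] [OrderTopology M]

theorem Set.OrdConnected.eventuallyConst_nhdsGT [NoMaxOrder M] {s : Set M} (hs : s.OrdConnected)
    (p : M) : EventuallyConst s (𝓝[>] p) := by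
  rw [eventuallyConst_set, or_iff_not_imp_right]
  intro hfreq
  obtain ⟨b, hb⟩ := exists_gt p
  obtain ⟨x, hx, hxs⟩ := (nhdsGT_basis p).frequently_iff.1 hfreq b hb
  refine (nhdsGT_basis p).eventually_iff.2 ⟨x, hx.1, fun y hy => ?_⟩
  obtain ⟨z, hz, hzs⟩ := (nhdsGT_basis p).frequently_iff.1 hfreq y hy.1
  exact hs.out hzs hxs ⟨hz.2.le, hy.2.le⟩

theorem Set.OrdConnected.eventuallyConst_nhdsLT [NoMinOrder M] {s : Set M} (hs : s.OrdConnected)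
    (p : M) : EventuallyConst s (𝓝[<] p) :=
  hs.dual.eventuallyConst_nhdsGT (OrderDual.toDual p)

end OrderTopology

namespace Paper

section Topology

variable {X : Type*} [TopologicalSpace X]

theorem isDiscrete_iff {s : Set X} : IsDiscrete s ↔ _root_.IsDiscrete s := by
  rw [isDiscrete_iff_forall_mem_exists_isOpen]
  refine forall₂_congr fun x _ => ⟨fun ⟨U, hU, _, hUs⟩ => ⟨U, hU, hUs⟩, fun ⟨U, hU, hUs⟩ => ?_⟩
  exact ⟨U, hU, (hUs.symm ▸ rfl : x ∈ U ∩ s).1, hUs⟩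

theorem isDiscrete_and_isClosed_iff {s : Set X} :
    IsDiscrete s ∧ IsClosed s ↔ ∀ x, Disjoint (𝓝[≠] x) (𝓟 s) := by
  rw [isDiscrete_iff, and_comm, isClosed_and_discrete_iff]

theorem isDiscrete_and_isClosed_of_subset {s t : Set X} (ht : IsDiscrete t ∧ IsClosed t)
    (hst : s ⊆ t) : IsDiscrete s ∧ IsClosed s :=
  isDiscrete_and_isClosed_iff.2 fun x =>
    (isDiscrete_and_isClosed_iff.1 ht x).mono_right (principal_mono.2 hst)

theorem isDiscrete_and_isClosed_singleton [T1Space X] (a : X) :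
    IsDiscrete ({a} : Set X) ∧ IsClosed ({a} : Set X) :=
  ⟨fun _ hx => ⟨univ, isOpen_univ, trivial, by rw [univ_inter, hx]⟩, isClosed_singleton⟩

end Topology

theorem IsOInterval.ordConnected {M : Type*} [Preorder M] {s : Set M} (hs : IsOInterval s) :
    s.OrdConnected := by
  rcases hs with ⟨a, b, rfl⟩ | ⟨a, rfl⟩ | ⟨b, rfl⟩ | rfl
  exacts [ordConnected_Ioo, ordConnected_Ioi, ordConnected_Iio, ordConnected_univ]

theorem FinUnionPtsIntervals.eventuallyConst {M : Type*} [PartialOrder M] {s : Set M}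
    (hs : FinUnionPtsIntervals s) {l : Filter M}
    (hl : ∀ t : Set M, t.OrdConnected → EventuallyConst t l) : EventuallyConst s l := by
  obtain ⟨F, n, J, hJ, rfl⟩ := hs
  rw [← iUnion_of_singleton_coe (F : Set M)]
  exact ((EventuallyConst.iUnion fun _ => hl _ ordConnected_singleton).comp₂ (· ∨ ·)
    (EventuallyConst.iUnion fun i => hl _ (hJ i).ordConnected))

section OrderTopology

variable {M : Type*} [LinearOrder M] [TopologicalSpace M] [OrderTopology M]

theorem isDiscrete_and_isClosed_iff_forall_exists_Ioo [NoMaxOrder M] [NoMinOrder M]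
    {s : Set M} : IsDiscrete s ∧ IsClosed s ↔
      ∀ x, ∃ u v, u < x ∧ x < v ∧ ∀ z, u < z → z < v → z ∈ s → z = x := by
  rw [isDiscrete_and_isClosed_iff]
  refine forall_congr' fun x => ?_
  rw [disjoint_principal_right, nhdsWithin, ((nhds_basis_Ioo x).inf_principal _).mem_iff]
  simp [subset_def, Prod.exists, and_assoc, not_imp_not]

theorem IsOInterval.isOpen {s : Set M} (hs : IsOInterval s) : IsOpen s := by
  rcases hs with ⟨a, b, rfl⟩ | ⟨a, rfl⟩ | ⟨b, rfl⟩ | rfl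
  exacts [isOpen_Ioo, isOpen_Ioi, isOpen_Iio, isOpen_univ]

variable {L : Language} [L.Structure M]

theorem LocallyOMinimal.eventuallyConst (hlo : LocallyOMinimal L M) {X : Set M}
    (hX : Def1 L M X) {p : M} {l : Filter M} (hl : l ≤ 𝓝 p)
    (hconn : ∀ t : Set M, t.OrdConnected → EventuallyConst t l) : EventuallyConst X l := by
  obtain ⟨I, hI, hpI, hXI⟩ := hlo X hX p
  refine (hXI.eventuallyConst hconn).congr (inter_eventuallyEq_left.2 ?_)
  filter_upwards [hl (hI.isOpen.mem_nhds hpI)] with x hx _ using hx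

theorem LocallyOMinimal.eventuallyConst_nhdsGT [NoMaxOrder M] (hlo : LocallyOMinimal L M)
    {X : Set M} (hX : Def1 L M X) (p : M) : EventuallyConst X (𝓝[>] p) :=
  hlo.eventuallyConst hX nhdsWithin_le_nhds fun _ ht => ht.eventuallyConst_nhdsGT p

theorem LocallyOMinimal.eventuallyConst_nhdsLT [NoMinOrder M] (hlo : LocallyOMinimal L M)
    {X : Set M} (hX : Def1 L M X) (p : M) : EventuallyConst X (𝓝[<] p) :=
  hlo.eventuallyConst hX nhdsWithin_le_nhds fun _ ht => ht.eventuallyConst_nhdsLT p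

theorem LocallyOMinimal.isDiscrete_and_isClosed_of_not_Ioo_subset [NoMaxOrder M] [NoMinOrder M]
    (hlo : LocallyOMinimal L M) {D : Set M} (hD : Def1 L M D)
    (h : ∀ c d, c < d → ¬ Ioo c d ⊆ D) : IsDiscrete D ∧ IsClosed D := by
  refine isDiscrete_and_isClosed_iff.2 fun x => ?_
  rw [disjoint_principal_right, ← nhdsLT_sup_nhdsGT, mem_sup]
  constructor
  · refine (eventuallyConst_set.1 (hlo.eventuallyConst_nhdsLT hD x)).resolve_left fun hin => ?_
    obtain ⟨c, hcx, hsub⟩ := (nhdsLT_basis x).eventually_iff.1 hin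
    exact h c x hcx hsub
  · refine (eventuallyConst_set.1 (hlo.eventuallyConst_nhdsGT hD x)).resolve_left fun hin => ?_
    obtain ⟨d, hxd, hsub⟩ := (nhdsGT_basis x).eventually_iff.1 hin
    exact h x d hxd hsub

theorem DefinablyComplete.exists_isLeast (hdc : DefinablyComplete L M) {X : Set M}
    (hX : Def1 L M X) (hXc : IsClosed X) (hne : X.Nonempty) (hbdd : BddBelow X) :
    ∃ m, IsLeast X m :=
  let ⟨m, hm⟩ := (hdc X hX hne).2 hbdd
  ⟨m, hXc.closure_subset (hm.mem_closure hne), hm.1⟩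

theorem DefinablyComplete.exists_isGreatest (hdc : DefinablyComplete L M) {X : Set M}
    (hX : Def1 L M X) (hXc : IsClosed X) (hne : X.Nonempty) (hbdd : BddAbove X) :
    ∃ m, IsGreatest X m :=
  let ⟨m, hm⟩ := (hdc X hX hne).1 hbdd
  ⟨m, hXc.closure_subset (hm.mem_closure hne), hm.1⟩

end OrderTopology

section Covering

variable {L : Language} {M : Type*} [L.IsOrdered] [LinearOrder M] [L.Structure M]
  [L.OrderedStructure M] [TopologicalSpace M] [OrderTopology M]

variable (L) in
structure DefinablyWellOrderedOn (r : M → M → Prop) (B : Set M) : Prop where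
  definable_rel : Def2 L M {z | r z.1 z.2}
  definable_set : Def1 L M B
  asymm : ∀ a b, r a b → ¬ r b a
  exists_least : ∀ X ⊆ B, Def1 L M X → X.Nonempty → ∃ m ∈ X, ∀ y ∈ X, y ≠ m → r m y

theorem DefinablyComplete.definablyWellOrderedOn_inter_Ici (hdc : DefinablyComplete L M)
    {S : Set M} (hS : Def1 L M S) (hSdc : IsDiscrete S ∧ IsClosed S) (y₀ : M) :
    DefinablyWellOrderedOn L (· < ·) (S ∩ Ici y₀) where
  definable_rel := definable_lt 0 1
  definable_set := (hS.comp_fin_one 0).inter ((definable_le 0 1).cons_const (mem_univ y₀))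
  asymm _ _ := lt_asymm
  exists_least X hXB hX hne := by
    obtain ⟨m, hmX, hm⟩ := hdc.exists_isLeast hX
      (isDiscrete_and_isClosed_of_subset hSdc (hXB.trans inter_subset_left)).2 hne
      ⟨y₀, fun y hy => (hXB hy).2⟩
    exact ⟨m, hmX, fun y hy hne => (hm hy).lt_of_ne' hne⟩

theorem DefinablyComplete.definablyWellOrderedOn_inter_Iic (hdc : DefinablyComplete L M)
    {S : Set M} (hS : Def1 L M S) (hSdc : IsDiscrete S ∧ IsClosed S) (y₀ : M) :
    DefinablyWellOrderedOn L (· > ·) (S ∩ Iic y₀) where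
  definable_rel := definable_lt 1 0
  definable_set := (hS.comp_fin_one 0).inter ((definable_le 1 0).cons_const (mem_univ y₀))
  asymm _ _ := lt_asymm
  exists_least X hXB hX hne := by
    obtain ⟨m, hmX, hm⟩ := hdc.exists_isGreatest hX
      (isDiscrete_and_isClosed_of_subset hSdc (hXB.trans inter_subset_left)).2 hne
      ⟨y₀, fun y hy => (hXB hy).2⟩
    exact ⟨m, hmX, fun y hy hne => (hm hy).lt_of_ne hne⟩

/-- Call an index of `u` a record if it is `r`-below every index of every point of `(u, q)`.
Points with a record come arbitrarily close to `q` (the last point of `(t, q)` carrying the least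
index occurring on `(t, q)` has one), so by local o-minimality they fill an interval `(a, q)`. But
the least index occurring on `(max a p, q)`, carried by some `w`, would be `r`-above the record
of a point to the left of `w`. -/
theorem LocallyOMinimal.not_Ioo_subset_of_definablyWellOrderedOn [DenselyOrdered M]
    [NoMinOrder M] (hlo : LocallyOMinimal L M) (hdc : DefinablyComplete L M)
    {r : M → M → Prop} {B : Set M} (hB : DefinablyWellOrderedOn L r B)
    {E : Set (M × M)} (hE : Def2 L M E)
    (hfib : ∀ y ∈ B, IsDiscrete {x | (x, y) ∈ E} ∧ IsClosed {x | (x, y) ∈ E})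
    {p q : M} (hpq : p < q) : ¬ Ioo p q ⊆ {x | ∃ y ∈ B, (x, y) ∈ E} := by
  intro hcov
  set labels : M → Set M := fun t => {y | y ∈ B ∧ ∃ w, t < w ∧ w < q ∧ (w, y) ∈ E}
  have hleast : ∀ t, p ≤ t → t < q → ∃ m ∈ labels t, ∀ y ∈ labels t, y ≠ m → r m y := by
    intro t hpt htq
    obtain ⟨w, htw, hwq⟩ := exists_between htq
    obtain ⟨y, hyB, hy⟩ := hcov ⟨hpt.trans_lt htw, hwq⟩
    refine hB.exists_least _ (fun y hy => hy.1) ?_ ⟨y, hyB, w, htw, hwq, hy⟩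
    exact ((hB.definable_set.comp_fin_one 2).inter ((definable_lt 2 0).inter
      ((definable_lt 0 1).inter (hE.comp_fin_two 0 3))).exists_cons).cons_const (mem_univ q)
      |>.cons_const (mem_univ t)
  set R : Set M :=
    {u | ∃ y ∈ B, (u, y) ∈ E ∧ ∀ w, u < w → w < q → ∀ y' ∈ B, (w, y') ∈ E → r y y'}
  have hRdef : Def1 L M R :=
    ((hB.definable_set.comp_fin_one 0).inter ((hE.comp_fin_two 2 0).inter
      ((definable_lt 3 0).imp ((definable_lt 0 2).imp ((hB.definable_set.comp_fin_one 0).imp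
        ((hE.comp_fin_two 1 0).imp (hB.definable_rel.comp_fin_two 2 0))).forall_cons)).forall_cons)
      ).exists_cons.cons_const (mem_univ q)
  have hR : ∀ t, p ≤ t → t < q → ∃ u ∈ R, t < u ∧ u < q := by
    intro t hpt htq
    obtain ⟨m, ⟨hmB, hm⟩, hmin⟩ := hleast t hpt htq
    have hYdef : Def1 L M {w | t < w ∧ w < q ∧ (w, m) ∈ E} :=
      ((definable_lt 2 3).inter ((definable_lt 3 1).inter (hE.comp_fin_two 3 0))).cons_const
        (mem_univ m) |>.cons_const (mem_univ q) |>.cons_const (mem_univ t)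
    obtain ⟨u, ⟨htu, huq, hu⟩, hmax⟩ := hdc.exists_isGreatest hYdef
      (isDiscrete_and_isClosed_of_subset (hfib m hmB) fun w hw => hw.2.2).2 hm
      ⟨q, fun w hw => hw.2.1.le⟩
    refine ⟨u, ⟨m, hmB, hu, fun w huw hwq y' hy'B hy' => ?_⟩, htu, huq⟩
    refine hmin y' ⟨hy'B, w, htu.trans huw, hwq, hy'⟩ fun hy'm => ?_
    subst hy'm
    exact (hmax ⟨htu.trans huw, hwq, hy'⟩).not_gt huw
  obtain ⟨a, haq, haR⟩ : ∃ a < q, Ioo a q ⊆ R := by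
    refine (nhdsLT_basis q).eventually_iff.1 <| (hlo.eventuallyConst_nhdsLT hRdef q)
      |>.eventually_mem_of_frequently <| (nhdsLT_basis q).frequently_iff.2 fun a ha => ?_
    obtain ⟨u, huR, hu, huq⟩ := hR (max a p) le_sup_right (max_lt ha hpq)
    exact ⟨u, ⟨(le_max_left a p).trans_lt hu, huq⟩, huR⟩
  obtain ⟨m, ⟨hmB, w, htw, hwq, hw⟩, hmin⟩ := hleast (max a p) le_sup_right (max_lt haq hpq)
  obtain ⟨w', htw', hw'w⟩ := exists_between htw
  obtain ⟨y, hyB, hy, hyR⟩ := haR ⟨(le_max_left a p).trans_lt htw', hw'w.trans hwq⟩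
  have hym : r y m := hyR w hw'w hwq m hmB hw
  rcases eq_or_ne y m with rfl | hne
  · exact hB.asymm _ _ hym hym
  · exact hB.asymm _ _ hym (hmin y ⟨hyB, w', htw', hw'w.trans hwq, hy⟩ hne)

/-- To the right of a point `t` with index `y₀`, local o-minimality makes the points having an
index `≥ y₀` either fill an interval or avoid one; the indices `≥ y₀`, respectively `≤ y₀`, of
`S` are definably well-ordered by `<`, respectively `>`. -/
theorem LocallyOMinimal.not_Ioo_subset_biUnion [DenselyOrdered M] [NoMaxOrder M] [NoMinOrder M]
    (hlo : LocallyOMinimal L M) (hdc : DefinablyComplete L M) {S : Set M} (hS : Def1 L M S)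
    (hSdc : IsDiscrete S ∧ IsClosed S) {E : Set (M × M)} (hE : Def2 L M E)
    (hfib : ∀ y ∈ S, IsDiscrete {x | (x, y) ∈ E} ∧ IsClosed {x | (x, y) ∈ E})
    {c d : M} (hcd : c < d) : ¬ Ioo c d ⊆ {x | ∃ y ∈ S, (x, y) ∈ E} := by
  intro hcov
  obtain ⟨t, hct, htd⟩ := exists_between hcd
  obtain ⟨y₀, hy₀S, hy₀⟩ := hcov ⟨hct, htd⟩
  have hZ : Def1 L M {x | ∃ y ∈ S ∩ Ici y₀, (x, y) ∈ E} :=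
    (((hS.comp_fin_one 0).inter (definable_le 1 0)).inter (hE.comp_fin_two 2 0)).exists_cons
      |>.cons_const (mem_univ y₀)
  rcases eventuallyConst_set.1 (hlo.eventuallyConst_nhdsGT hZ t) with hin | hout
  · obtain ⟨b, htb, hsub⟩ := (nhdsGT_basis t).eventually_iff.1 hin
    exact hlo.not_Ioo_subset_of_definablyWellOrderedOn hdc
      (hdc.definablyWellOrderedOn_inter_Ici hS hSdc y₀) hE (fun y hy => hfib y hy.1) htb hsub
  · obtain ⟨b, htb, hsub⟩ := (nhdsGT_basis t).eventually_iff.1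
      (hout.and (mem_nhdsWithin_of_mem_nhds (Ioo_mem_nhds hct htd)))
    refine hlo.not_Ioo_subset_of_definablyWellOrderedOn hdc
      (hdc.definablyWellOrderedOn_inter_Iic hS hSdc y₀) hE (fun y hy => hfib y hy.1) htb
      fun x hx => ?_
    obtain ⟨hxZ, hxcd⟩ := hsub hx
    obtain ⟨y, hyS, hy⟩ := hcov hxcd
    exact ⟨y, ⟨hyS, le_of_not_ge fun hy₀y => hxZ ⟨y, ⟨hyS, hy₀y⟩, hy⟩⟩, hy⟩

theorem LocallyOMinimal.isDiscrete_and_isClosed_biUnion [DenselyOrdered M] [NoMaxOrder M]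
    [NoMinOrder M] (hlo : LocallyOMinimal L M) (hdc : DefinablyComplete L M) {S : Set M}
    (hS : Def1 L M S) (hSdc : IsDiscrete S ∧ IsClosed S) {E : Set (M × M)} (hE : Def2 L M E)
    (hfib : ∀ y ∈ S, IsDiscrete {x | (x, y) ∈ E} ∧ IsClosed {x | (x, y) ∈ E}) :
    IsDiscrete {x | ∃ y ∈ S, (x, y) ∈ E} ∧ IsClosed {x | ∃ y ∈ S, (x, y) ∈ E} :=
  hlo.isDiscrete_and_isClosed_of_not_Ioo_subset
    ((hS.comp_fin_one 0).inter (hE.comp_fin_two 1 0)).exists_cons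
    fun _ _ => hlo.not_Ioo_subset_biUnion hdc hS hSdc hE hfib

end Covering

section DiscreteClosure

variable {L : Language} {M : Type*} [L.Structure M] [TopologicalSpace M]

theorem discl_mono {A B : Set M} (hAB : A ⊆ B) : discl L M A ⊆ discl L M B :=
  fun _ ⟨s, hs, hsx⟩ => ⟨s, hs.mono hAB, hsx⟩

theorem subset_discl [T1Space M] (A : Set M) : A ⊆ discl L M A :=
  fun a ha => ⟨{a}, definable_eq_const 0 ha, (isDiscrete_and_isClosed_singleton a).1,
    (isDiscrete_and_isClosed_singleton a).2, rfl⟩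

variable [L.IsOrdered] [LinearOrder M] [L.OrderedStructure M] [DenselyOrdered M]
  [NoMaxOrder M] [NoMinOrder M] [OrderTopology M]

theorem discl_insert_subset (hlo : LocallyOMinimal L M) (hdc : DefinablyComplete L M)
    {A : Set M} {b : M} (hb : b ∈ discl L M A) : discl L M (insert b A) ⊆ discl L M A := by
  rintro x ⟨s, hs, hsd, hsc, hx⟩
  obtain ⟨S, hS, hSd, hSc, hbS⟩ := hb
  obtain ⟨E, hE, hEb⟩ := hs.exists_family_of_insert
  set S' : Set M :=
    {y | y ∈ S ∧ ∀ x, ∃ u v, u < x ∧ x < v ∧ ∀ z, u < z → z < v → (z, y) ∈ E → z = x}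
  have hS' : A.Definable L {f : Fin 1 → M | f 0 ∈ S'} :=
    (hS.comp_fin_one 0).inter ((((definable_lt 1 2).inter ((definable_lt 2 0).inter
      ((definable_lt 2 0).imp ((definable_lt 0 1).imp ((hE.comp_fin_two 0 4).imp
        (definable_eq 0 3)))).forall_cons)).exists_cons.exists_cons.forall_cons))
  have hfib : ∀ y ∈ S', IsDiscrete {x | (x, y) ∈ E} ∧ IsClosed {x | (x, y) ∈ E} :=
    fun y hy => isDiscrete_and_isClosed_iff_forall_exists_Ioo.2 hy.2
  have hbS' : b ∈ S' := ⟨hbS, by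
    simpa only [hEb] using isDiscrete_and_isClosed_iff_forall_exists_Ioo.1 ⟨hsd, hsc⟩⟩
  have hunion := hlo.isDiscrete_and_isClosed_biUnion hdc (hS'.mono (subset_univ A))
    (isDiscrete_and_isClosed_of_subset ⟨hSd, hSc⟩ fun y hy => hy.1) (hE.mono (subset_univ A)) hfib
  exact ⟨_, ((hS'.comp_fin_one 0).inter (hE.comp_fin_two 1 0)).exists_cons, hunion.1, hunion.2,
    b, hbS', (hEb x).2 hx⟩

theorem discl_union_finset_subset (hlo : LocallyOMinimal L M) (hdc : DefinablyComplete L M)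
    {A : Set M} {B : Finset M} (hB : ↑B ⊆ discl L M A) : discl L M (A ∪ B) ⊆ discl L M A := by
  classical
  induction B using Finset.induction_on with
  | empty => simp
  | insert b B _ ih =>
    rw [Finset.coe_insert, union_insert]
    have hbB := hB (Finset.mem_coe.2 (Finset.mem_insert_self b B))
    exact (discl_insert_subset hlo hdc (discl_mono subset_union_left hbB)).trans
      (ih ((Finset.coe_subset.2 (Finset.subset_insert b B)).trans hB))

end DiscreteClosure

end Paper

/-- In a definably complete locally o-minimal structure, the discrete closure operator is
idempotent: `discl (discl A) = discl A` for every `A ⊆ M`. -/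
theorem discl_idem
    {L : FirstOrder.Language} {M : Type*} [L.IsOrdered] [LinearOrder M] [L.Structure M]
    [L.OrderedStructure M] [DenselyOrdered M] [NoMaxOrder M] [NoMinOrder M]
    [TopologicalSpace M] [OrderTopology M]
    (hlo : LocallyOMinimal L M) (hdc : DefinablyComplete L M)
    (A : Set M) :
    discl L M (discl L M A) = discl L M A := by
  refine Subset.antisymm ?_ (discl_mono (subset_discl A))
  rintro x ⟨s, hs, hsx⟩
  obtain ⟨B, hB, hsB⟩ := Set.definable_iff_finitely_definable.1 hs
  exact discl_union_finset_subset hlo hdc hB ⟨s, hsB.mono subset_union_right, hsx⟩
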